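/- arXiv:2504.08403 — 3 statements merged into one kernel-verified Lean document; each statement's English description precedes it below -/
import Mathlib

section
/- Let G = (V, E) be a finite directed graph with edge weights w : E → ℝ≥0, a source vertex s ∈ V, and a terminal set D ⊆ V. Let G' = (V', E') be the vertex-split graph of G: each vertex v with outgoing edges e_1, …, e_k is replaced by copies v_1, …, v_k, each copy v_j carries exactly the one outgoing edge corresponding to e_j (with the same weight and with head replaced by every copy of the original head, preserving weights), and every edge entering v in G yields an edge entering every copy v_j in G' with the same weight; a set D' of terminal copy-classes corresponds to D, where a copy-class counts as reached if any one of its copies is reached. Then the minimum, over edge sets F' ⊆ E' such that from some copy of s every terminal copy-class of D' is reachable, of the problem-P activation cost Σ_{v' ∈ V'} max{ w(e) : e ∈ F' outgoing from v' } equals the minimum, over edge sets F ⊆ E such that every terminal in D is reachable from s using only edges of F, of the total weight Σ_{e ∈ F} w(e). -/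
open Finset

/-- Reachability from `a` to `b` in a directed graph (edges given by their tail map `tl`
and head map `hd`) using only edges belonging to `F`. -/
def Reach {V E : Type*} (tl hd : E → V) (F : Finset E) (a b : V) : Prop :=
  Relation.ReflTransGen (fun x y => ∃ e ∈ F, tl e = x ∧ hd e = y) a b

/-- The original vertex ("copy-class") of a copy in the vertex-split graph.
The copies of a vertex `v` are: `Sum.inr e` for each outgoing edge `e` of `v`
(the copy carrying the single outgoing edge `e`), together with `Sum.inl v`
(a copy with no outgoing edge, needed so that vertices with no outgoing edge
still have a copy). -/
def cls {V E : Type*} (tl : E → V) : V ⊕ E → V := Sum.elim id tl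

/-!
Projecting a feasible edge set of the split graph to its original edges keeps every terminal
reachable from `s`, and since each copy carries a single original edge, the activation cost of
a split edge set is exactly the Steiner cost of its projection. Conversely, a feasible `F` lifts
to the split graph by taking, for each `e ∈ F`, its copies into every copy of `hd e`; this lift
projects back to `F`. Hence both infima range over sets that dominate each other.
-/

/-- Problem-P activation cost when the edge `(e, x)` leaves the vertex `t e` with weight `w e`. -/
def activationCost {ι E X : Type*} [Fintype ι] [DecidableEq ι] (t : E → ι) (w : E → NNReal)
    (F' : Finset (E × X)) : NNReal :=
  ∑ c, (F'.filter fun p => t p.1 = c).sup fun p => w p.1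

theorem activationCost_eq_sum_image_fst {ι E X : Type*} [Fintype ι] [DecidableEq ι]
    [DecidableEq E] {t : E → ι} (ht : Function.Injective t) (w : E → NNReal)
    (F' : Finset (E × X)) :
    activationCost t w F' = ∑ e ∈ F'.image Prod.fst, w e := by
  set cost : ι → NNReal := fun c => (F'.filter fun p => t p.1 = c).sup fun p => w p.1
  have cost_of_mem : ∀ e ∈ F'.image Prod.fst, cost (t e) = w e := by
    intro e he
    obtain ⟨p, hp, rfl⟩ := mem_image.mp he
    calc cost (t p.1)
        = (F'.filter fun q => t q.1 = t p.1).sup fun _ => w p.1 :=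
          sup_congr rfl fun q hq => by rw [ht (mem_filter.mp hq).2]
      _ = w p.1 :=
          sup_const (s := F'.filter fun q => t q.1 = t p.1) ⟨p, mem_filter.mpr ⟨hp, rfl⟩⟩ _
  have cost_of_not_mem : ∀ c ∉ (F'.image Prod.fst).image t, cost c = 0 := by
    intro c hc
    have : (F'.filter fun p => t p.1 = c) = ∅ :=
      filter_false_of_mem fun p hp hpc => hc (mem_image.mpr ⟨p.1, mem_image_of_mem _ hp, hpc⟩)
    simp only [cost, this, sup_empty]
    rfl
  calc activationCost t w F'
      = ∑ c ∈ (F'.image Prod.fst).image t, cost c :=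
        (sum_subset (subset_univ _) fun c _ hc => cost_of_not_mem c hc).symm
    _ = ∑ e ∈ F'.image Prod.fst, cost (t e) := sum_image fun _ _ _ _ h => ht h
    _ = ∑ e ∈ F'.image Prod.fst, w e := sum_congr rfl cost_of_mem

theorem Reach.map {V E W E' : Type*} {tl hd : E → V} {tl' hd' : E' → W} {F : Finset E}
    [DecidableEq E'] (φ : V → W) (ψ : E → E') (htl : ∀ e, φ (tl e) = tl' (ψ e))
    (hhd : ∀ e ∈ F, φ (hd e) = hd' (ψ e)) {a b : V} (h : Reach tl hd F a b) :
    Reach tl' hd' (F.image ψ) (φ a) (φ b) :=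
  Relation.ReflTransGen.lift φ (fun _ _ ⟨e, he, hx, hy⟩ =>
    ⟨ψ e, mem_image_of_mem ψ he, hx ▸ (htl e).symm, hy ▸ (hhd e he).symm⟩) _ _ h

section SplitGraph

variable {V E : Type*} (tl hd : E → V)

def splitEdges [Fintype V] [Fintype E] [DecidableEq V] (F : Finset E) : Finset (E × (V ⊕ E)) :=
  (F ×ˢ univ).filter fun p => cls tl p.2 = hd p.1

@[simp]
theorem mem_splitEdges [Fintype V] [Fintype E] [DecidableEq V] {F : Finset E} {e : E}
    {c : V ⊕ E} : (e, c) ∈ splitEdges tl hd F ↔ e ∈ F ∧ cls tl c = hd e := by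
  simp [splitEdges]

theorem image_fst_splitEdges [Fintype V] [Fintype E] [DecidableEq V] [DecidableEq E]
    (F : Finset E) :
    (splitEdges tl hd F).image Prod.fst = F := by
  ext e
  simp only [splitEdges, mem_image, mem_filter, mem_product, mem_univ, and_true]
  exact ⟨fun ⟨p, ⟨hp, _⟩, hpe⟩ => hpe ▸ hp, fun he => ⟨(e, Sum.inl (hd e)), ⟨he, rfl⟩, rfl⟩⟩

theorem exists_reach_split_of_reach {F : Finset E} {F' : Finset (E × (V ⊕ E))}
    (hF' : ∀ e ∈ F, ∀ c, cls tl c = hd e → (e, c) ∈ F') {a b : V} (h : Reach tl hd F a b)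
    (c : V ⊕ E) (hc : cls tl c = b) :
    ∃ c₀, cls tl c₀ = a ∧ Reach (fun p : E × (V ⊕ E) => Sum.inr p.1) Prod.snd F' c₀ c := by
  induction h using Relation.ReflTransGen.head_induction_on with
  | refl => exact ⟨c, hc, .refl⟩
  | head hstep _ ih =>
    obtain ⟨e, he, rfl, hhe⟩ := hstep
    obtain ⟨c₁, hc₁, hreach⟩ := ih
    exact ⟨Sum.inr e, rfl, .head ⟨(e, c₁), hF' e he c₁ (hc₁.trans hhe.symm), rfl, rfl⟩ hreach⟩

theorem reach_of_reach_split [DecidableEq E] {F' : Finset (E × (V ⊕ E))}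
    (hF' : ∀ p ∈ F', cls tl p.2 = hd p.1) {c₀ c : V ⊕ E}
    (h : Reach (fun p : E × (V ⊕ E) => Sum.inr p.1) Prod.snd F' c₀ c) :
    Reach tl hd (F'.image Prod.fst) (cls tl c₀) (cls tl c) :=
  Reach.map (tl := fun p : E × (V ⊕ E) => Sum.inr p.1) (hd := Prod.snd) (cls tl) Prod.fst
    (fun _ => rfl) hF' h

end SplitGraph

/-- Let `G = (V, E)` be a finite weighted directed graph with
weights `w : E → ℝ≥0`, source `s` and terminal set `D`.  In the vertex-split graph
`G'` the vertices are the copies `V ⊕ E` (with copy-class `cls tl`), and the edges are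
the pairs `p = (e, c)` with `cls tl c = hd e`: the edge corresponding to `e` going out
of the copy `Sum.inr e` of `tl e` that carries `e`, into the copy `c` of `hd e`, with
weight `w e`.  Thus each copy inherits all incoming edges of its original vertex but
carries (duplicates, one per copy of the head, of) exactly one outgoing edge.
Then the minimum, over edge sets `F'` in `G'` through which every terminal copy-class
is reachable from a copy of `s`, of the problem-P activation cost
`∑_{c} max { w e : (e, c') ∈ F' outgoing from c }`, equals the minimum, over edge
sets `F ⊆ E` through which every terminal of `D` is reachable from `s`, of the total
weight `∑_{e ∈ F} w e`. -/
theorem split_reduction_optima_eq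
    {V E : Type} [Fintype V] [Fintype E] [DecidableEq V] [DecidableEq E]
    (tl hd : E → V) (w : E → NNReal) (s : V) (D : Finset V) :
    sInf {x : NNReal |
        ∃ F' : Finset (E × (V ⊕ E)),
          (∀ p ∈ F', cls tl p.2 = hd p.1) ∧
          (∀ d ∈ D, ∃ c₀ c : V ⊕ E, cls tl c₀ = s ∧ cls tl c = d ∧
              Reach (fun p : E × (V ⊕ E) => (Sum.inr p.1 : V ⊕ E))
                (fun p => p.2) F' c₀ c) ∧
          x = ∑ c : V ⊕ E,
                (F'.filter fun p => (Sum.inr p.1 : V ⊕ E) = c).sup fun p => w p.1} =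
    sInf {x : NNReal |
        ∃ F : Finset E, (∀ d ∈ D, Reach tl hd F s d) ∧ x = ∑ e ∈ F, w e} := by
  have cost_eq := activationCost_eq_sum_image_fst (X := V ⊕ E) (Sum.inr_injective (α := V)) w
  refine csInf_eq_csInf_of_forall_exists_le ?_ ?_
  · rintro _ ⟨F', hF', hreach, rfl⟩
    refine ⟨_, ⟨F'.image Prod.fst, fun d hdD => ?_, rfl⟩, (cost_eq F').ge⟩
    obtain ⟨c₀, c, rfl, rfl, h⟩ := hreach d hdD
    exact reach_of_reach_split tl hd hF' h
  · rintro _ ⟨F, hreach, rfl⟩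
    refine ⟨_, ⟨splitEdges tl hd F, fun p hp => ((mem_splitEdges tl hd).mp hp).2,
      fun d hdD => ?_, rfl⟩, ?_⟩
    · obtain ⟨c₀, hc₀, h⟩ := exists_reach_split_of_reach tl hd
        (fun _ he _ hc => (mem_splitEdges tl hd).mpr ⟨he, hc⟩)
        (hreach d hdD) (Sum.inl d) rfl
      exact ⟨c₀, Sum.inl d, hc₀, rfl, h⟩
    · exact (cost_eq (splitEdges tl hd F)).trans_le (by rw [image_fst_splitEdges])
end

section
/- Let G = (V, E) be a finite directed graph with edge weights w : E → ℝ≥0, source s ∈ V, and terminal set D ⊆ V, and let G' be its vertex-split graph as above. For every edge set F' in G' such that every terminal copy-class is reachable from a copy of s using only edges of F', there exists an edge set F ⊆ E in G such that every d ∈ D is reachable from s using only edges of F and Σ_{e ∈ F} w(e) ≤ Σ_{v' ∈ V'} max{ w(e) : e ∈ F' outgoing from v' }. -/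
open Finset

/-- With the vertex-split graph `G'` of `G` (edges of `G'` are pairs
`p = (e, c)` with `cls tl c = hd e`, going out of the copy `Sum.inr e` of `tl e` into the
copy `c` of `hd e`, with weight `w e`): for every edge set `F'` in `G'` such that every
terminal copy-class is reachable from a copy of `s` using only edges of `F'`, there is an
edge set `F ⊆ E` in `G` such that every `d ∈ D` is reachable from `s` using only edges of
`F` and `∑_{e ∈ F} w e` is at most the problem-P activation cost of `F'`. -/
theorem split_to_steiner
    {V E : Type} [Fintype V] [Fintype E] [DecidableEq V] [DecidableEq E]
    (tl hd : E → V) (w : E → NNReal) (s : V) (D : Finset V)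
    (F' : Finset (E × (V ⊕ E)))
    (hvalid : ∀ p ∈ F', cls tl p.2 = hd p.1)
    (hfeas : ∀ d ∈ D, ∃ c₀ c : V ⊕ E, cls tl c₀ = s ∧ cls tl c = d ∧
        Reach (fun p : E × (V ⊕ E) => (Sum.inr p.1 : V ⊕ E)) (fun p => p.2) F' c₀ c) :
    ∃ F : Finset E, (∀ d ∈ D, Reach tl hd F s d) ∧
      ∑ e ∈ F, w e ≤
        ∑ c : V ⊕ E,
          (F'.filter fun p => (Sum.inr p.1 : V ⊕ E) = c).sup fun p => w p.1 := by
  classical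
  refine ⟨F'.image Prod.fst, ?_, ?_⟩
  · intro d hd'
    obtain ⟨c₀, c, hc₀, hc, hreach⟩ := hfeas d hd'
    subst hc₀; subst hc
    clear hd'
    induction hreach with
    | refl => exact Relation.ReflTransGen.refl
    | tail _ hstep ih =>
      obtain ⟨p, hp, hpt, hph⟩ := hstep
      subst hph
      refine ih.tail ⟨p.1, Finset.mem_image_of_mem _ hp, ?_, (hvalid p hp).symm ▸ rfl⟩
      rw [← hpt]; rfl
  · calc ∑ e ∈ F'.image Prod.fst, w e
        ≤ ∑ e ∈ F'.image Prod.fst,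
            (F'.filter fun p => (Sum.inr p.1 : V ⊕ E) = Sum.inr e).sup
              fun p => w p.1 := by
          refine Finset.sum_le_sum fun e he => ?_
          obtain ⟨p, hp, rfl⟩ := Finset.mem_image.mp he
          have hmem : p ∈ F'.filter fun q => (Sum.inr q.1 : V ⊕ E) = Sum.inr p.1 :=
            Finset.mem_filter.mpr ⟨hp, rfl⟩
          exact Finset.le_sup (f := fun q => w q.1) hmem
      _ = ∑ c ∈ (F'.image Prod.fst).image (Sum.inr : E → V ⊕ E),
            (F'.filter fun p => (Sum.inr p.1 : V ⊕ E) = c).sup fun p => w p.1 := by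
          rw [Finset.sum_image (fun a _ b _ h => Sum.inr.inj h)]
      _ ≤ _ := Finset.sum_le_sum_of_subset (Finset.subset_univ _)
end

section
/- Let G = (V, E) be a finite directed graph with edge weights w : E → ℝ≥0, source s ∈ V, and terminal set D ⊆ V, and let G' be its vertex-split graph as above. For every edge set F ⊆ E such that every d ∈ D is reachable from s using only edges of F, there exists an edge set F' in G' such that every terminal copy-class is reachable from a copy of s using only edges of F', and the problem-P activation cost Σ_{v' ∈ V'} max{ w(e) : e ∈ F' outgoing from v' } is at most Σ_{e ∈ F} w(e). -/
open Finset

/-- With the vertex-split graph `G'` of `G` (edges of `G'` are pairs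
`p = (e, c)` with `cls tl c = hd e`, going out of the copy `Sum.inr e` of `tl e` into the
copy `c` of `hd e`, with weight `w e`): for every edge set `F ⊆ E` such that every `d ∈ D`
is reachable from `s` using only edges of `F`, there is an edge set `F'` in `G'` such that
every terminal copy-class is reachable from a copy of `s` using only edges of `F'`, and the
problem-P activation cost of `F'` is at most `∑_{e ∈ F} w e`. -/
theorem steiner_to_split
    {V E : Type} [Fintype V] [Fintype E] [DecidableEq V] [DecidableEq E]
    (tl hd : E → V) (w : E → NNReal) (s : V) (D : Finset V)
    (F : Finset E) (hfeas : ∀ d ∈ D, Reach tl hd F s d) :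
    ∃ F' : Finset (E × (V ⊕ E)),
      (∀ p ∈ F', cls tl p.2 = hd p.1) ∧
      (∀ d ∈ D, ∃ c₀ c : V ⊕ E, cls tl c₀ = s ∧ cls tl c = d ∧
          Reach (fun p : E × (V ⊕ E) => (Sum.inr p.1 : V ⊕ E)) (fun p => p.2) F' c₀ c) ∧
      (∑ c : V ⊕ E,
          (F'.filter fun p => (Sum.inr p.1 : V ⊕ E) = c).sup fun p => w p.1) ≤
        ∑ e ∈ F, w e := by
  classical
  set F' : Finset (E × (V ⊕ E)) :=
    (F ×ˢ (Finset.univ : Finset (V ⊕ E))).filter (fun p => cls tl p.2 = hd p.1) with hF'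
  refine ⟨F', ?_, ?_, ?_⟩
  · intro p hp
    exact (Finset.mem_filter.mp hp).2
  · intro d hd'
    have h := hfeas d hd'
    clear hfeas hd'
    induction h using Relation.ReflTransGen.head_induction_on with
    | refl => exact ⟨Sum.inl d, Sum.inl d, rfl, rfl, Relation.ReflTransGen.refl⟩
    | head hstep _ ih =>
      obtain ⟨e, heF, hte, hhe⟩ := hstep
      obtain ⟨c₀, c, hc₀, hc, hr⟩ := ih
      refine ⟨Sum.inr e, c, hte, hc, Relation.ReflTransGen.head ?_ hr⟩
      exact ⟨(e, c₀), Finset.mem_filter.mpr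
        ⟨Finset.mem_product.mpr ⟨heF, Finset.mem_univ _⟩, by simp [hc₀, hhe]⟩, rfl, rfl⟩
  · rw [Fintype.sum_sum_type]
    have h1 : ∀ v : V, (F'.filter fun p => (Sum.inr p.1 : V ⊕ E) = Sum.inl v) = ∅ := by
      intro v
      apply Finset.filter_false_of_mem
      intro p _ h
      exact absurd h (by simp)
    have h2 : ∀ e : E, ((F'.filter fun p => (Sum.inr p.1 : V ⊕ E) = Sum.inr e).sup
        fun p => w p.1) ≤ if e ∈ F then w e else 0 := by
      intro e
      apply Finset.sup_le
      intro p hp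
      obtain ⟨hpF', hpe⟩ := Finset.mem_filter.mp hp
      have he : p.1 = e := by simpa using hpe
      have hF : p.1 ∈ F := (Finset.mem_product.mp (Finset.mem_filter.mp hpF').1).1
      rw [he] at hF ⊢
      simp [hF]
    have hsum : (∑ e : E, (F'.filter fun p => (Sum.inr p.1 : V ⊕ E) = Sum.inr e).sup
        fun p => w p.1) ≤ ∑ e ∈ F, w e := by
      calc _ ≤ ∑ e : E, if e ∈ F then w e else 0 := Finset.sum_le_sum fun e _ => h2 e
        _ = ∑ e ∈ F, w e := by rw [Finset.sum_ite_mem, Finset.univ_inter]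
    have hzero : (∑ v : V, (F'.filter fun p => (Sum.inr p.1 : V ⊕ E) = Sum.inl v).sup
        fun p => w p.1) = 0 := by simp [h1]
    rw [hzero, zero_add]
    exact hsum
end
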